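/- Define on the null-shell the weight ζ := 2 − M^{1/4}·sgn(p_{r*})·sgn(r−3M)·|p_{r*}/p_t|^{1/4}·|1/r − 1/(3M)|^{1/4}, where p_t = −E. Then 1 ≤ ζ ≤ 3 at every point of the null-shell. Moreover, there exists a constant c > 0, depending only on M, such that along any radially reduced future-directed null geodesic, at every parameter s₀ with p_{r*}(s₀) ≠ 0 and r(s₀) ≠ 3M, the function s ↦ ζ(s) is differentiable at s₀ and its derivative satisfies ζ'(s₀) ≤ −c·( |p_{r*}|/r² + |1 − 3M/r|·ℓ²/(r³E) ) evaluated at s₀. -/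

import Mathlib

open Real

/-- The weight `ζ = 2 − M^{1/4}·sgn(p_{r*})·sgn(r−3M)·|p_{r*}/p_t|^{1/4}·|1/r − 1/(3M)|^{1/4}`
on the null-shell, with `p_t = −E`. -/
noncomputable def zetaWeight (M E rv pv : ℝ) : ℝ :=
  2 - M ^ ((1 : ℝ) / 4) * Real.sign pv * Real.sign (rv - 3 * M)
      * |pv / (-E)| ^ ((1 : ℝ) / 4) * |1 / rv - 1 / (3 * M)| ^ ((1 : ℝ) / 4)

/-!
With `X = (p_{r*}/E)(1 - 3M/r)/3` the weight is `ζ = 2 - sgn X · |X|^{1/4}`, and `|X| ≤ 1/3` on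
the null-shell. Along a geodesic `X' = (3M p_{r*}²/r² + (1 - 3M/r)² ℓ²/r³)/(3E) ≥ 0`, hence
`ζ' = -X'/(4|X|^{3/4})`. In the scale-free variables `a = |p_{r*}|/E`, `b = |1 - 3M/r|`, `m = M/r`,
`L = ℓ²/(r²E²)`, tied by the null-shell relation `a² + (1 - 2m)L = 1`, the required lower bound on
`X'/|X|^{3/4}` becomes two polynomial inequalities in `y = |X|^{1/4}`, `y⁴ = ab/3`, proved by
comparing `a`, `b` and `y`.
-/

open Filter Topology

lemma Real.sign_mul (x y : ℝ) : Real.sign (x * y) = Real.sign x * Real.sign y := by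
  rcases lt_trichotomy x 0 with hx | rfl | hx <;> rcases lt_trichotomy y 0 with hy | rfl | hy <;>
    simp [Real.sign_of_neg, Real.sign_of_pos, mul_pos_of_neg_of_neg, mul_neg_of_neg_of_pos,
      mul_neg_of_pos_of_neg, *]

lemma Real.abs_sign_le_one (x : ℝ) : |Real.sign x| ≤ 1 := by
  rcases Real.sign_apply_eq x with h | h | h <;> simp [h]

noncomputable def signedRpow (q x : ℝ) : ℝ := Real.sign x * |x| ^ q

lemma abs_signedRpow_le_one {q x : ℝ} (hq : 0 ≤ q) (hx : |x| ≤ 1) : |signedRpow q x| ≤ 1 := by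
  rw [signedRpow, abs_mul, abs_of_nonneg (rpow_nonneg (abs_nonneg x) q)]
  exact mul_le_one₀ (Real.abs_sign_le_one x) (by positivity) (rpow_le_one (abs_nonneg x) hx hq)

lemma hasDerivAt_signedRpow (q : ℝ) {x : ℝ} (hx : x ≠ 0) :
    HasDerivAt (signedRpow q) (q * |x| ^ (q - 1)) x := by
  rcases hx.lt_or_gt with hx | hx
  · have hloc : signedRpow q =ᶠ[𝓝 x] fun y => -(-y) ^ q := by
      filter_upwards [Iio_mem_nhds hx] with y hy
      rw [signedRpow, Real.sign_of_neg hy, abs_of_neg hy]; ring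
    have h : HasDerivAt (fun y => -(-y) ^ q) (-(-1 * q * (-x) ^ (q - 1))) x :=
      ((hasDerivAt_neg x).rpow_const (Or.inl (neg_ne_zero.2 hx.ne))).neg
    rw [abs_of_neg hx]
    exact (h.congr_of_eventuallyEq hloc).congr_deriv (by ring)
  · have hloc : signedRpow q =ᶠ[𝓝 x] fun y => y ^ q := by
      filter_upwards [Ioi_mem_nhds hx] with y hy
      rw [signedRpow, Real.sign_of_pos hy, abs_of_pos hy, one_mul]
    rw [abs_of_pos hx]
    exact (hasDerivAt_rpow_const (Or.inl hx.ne')).congr_of_eventuallyEq hloc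

noncomputable def zetaInner (M E r p : ℝ) : ℝ := p / E * (1 - 3 * M / r) / 3

lemma zetaWeight_eq {M E r p : ℝ} (hM : 0 < M) (hr : 0 < r) (hE : 0 < E) :
    zetaWeight M E r p = 2 - signedRpow ((1 : ℝ) / 4) (zetaInner M E r p) := by
  have hX : zetaInner M E r p = (3 * E * r)⁻¹ * (p * (r - 3 * M)) := by
    rw [zetaInner]; field_simp
  have habs : |zetaInner M E r p| = M * (|p / -E| * |1 / r - 1 / (3 * M)|) := by
    rw [hX, abs_mul, abs_mul, abs_div, abs_neg, abs_of_pos hE, abs_of_pos (by positivity),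
      show 1 / r - 1 / (3 * M) = (3 * M * r)⁻¹ * (3 * M - r) by field_simp, abs_mul,
      abs_of_pos (by positivity : (0:ℝ) < (3 * M * r)⁻¹), abs_sub_comm]
    field_simp
  rw [zetaWeight, signedRpow, habs, hX, Real.sign_mul,
    Real.sign_of_pos (by positivity : (0 : ℝ) < (3 * E * r)⁻¹), one_mul, Real.sign_mul,
    mul_rpow hM.le (by positivity), mul_rpow (abs_nonneg _) (abs_nonneg _)]
  ring

section NormalizedShell

variable {a b m L y : ℝ}

lemma radial_term_le_rate (ha : 0 ≤ a) (hb : b ≤ 1) (hm : 0 ≤ m) (hm2 : 2 * m ≤ 1)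
    (hL : 0 ≤ L) (hshell : a ^ 2 + (1 - 2 * m) * L = 1) (hy : y ^ 4 = a * b / 3) :
    m * a * y ^ 3 ≤ m * a ^ 2 + b ^ 2 * L / 3 := by
  have hbL : 0 ≤ b ^ 2 * L / 3 := by positivity
  rcases le_or_gt (y ^ 3) a with hya | hay
  · nlinarith [mul_le_mul_of_nonneg_left hya (mul_nonneg hm ha)]
  -- otherwise `a < b³/27` is tiny, and the angular term `b²L/3` carries the bound
  · have hy0 : 0 < y := (Odd.pow_pos_iff (by decide)).1 (ha.trans_lt hay)
    have hb0 : 0 < b := by nlinarith [pow_pos hy0 4]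
    have hyb : y < b / 3 := by nlinarith [pow_pos hy0 3]
    have hy3 : y ^ 3 < b ^ 3 / 27 := by
      nlinarith [pow_lt_pow_left₀ hyb hy0.le (by norm_num : (3 : ℕ) ≠ 0)]
    have hb6 : b ^ 6 ≤ b ^ 2 := pow_le_pow_of_le_one hb0.le hb (by norm_num)
    have hL' : 728 / 729 ≤ L := by nlinarith [mul_le_mul hay.le hay.le ha (by positivity)]
    calc m * a * y ^ 3 ≤ 1 / 2 * (b ^ 3 / 27) * (b ^ 3 / 27) := by gcongr <;> linarith
      _ ≤ b ^ 2 * L / 3 := by nlinarith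
      _ ≤ m * a ^ 2 + b ^ 2 * L / 3 := by nlinarith [mul_nonneg hm (sq_nonneg a)]

lemma angular_term_le_rate (ha : 0 ≤ a) (hm : 0 ≤ m) (hm2 : 2 * m < 1) (hb : b = |1 - 3 * m|)
    (hL : 0 ≤ L) (hshell : a ^ 2 + (1 - 2 * m) * L = 1) (hy0 : 0 ≤ y) (hy : y ^ 4 = a * b / 3) :
    b * L * y ^ 3 ≤ 12 * (m * a ^ 2 + b ^ 2 * L / 3) := by
  have hb0 : 0 ≤ b := hb ▸ abs_nonneg _
  have hb1 : b ≤ 1 := by rw [hb, abs_le]; constructor <;> linarith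
  have ha1 : a ≤ 1 := by nlinarith [mul_nonneg (by linarith : (0:ℝ) ≤ 1 - 2 * m) hL]
  have hy1 : y ≤ 1 := by
    refine (pow_le_one_iff_of_nonneg hy0 (by norm_num : 4 ≠ 0)).1 ?_
    nlinarith [mul_le_mul ha1 hb1 hb0 zero_le_one]
  rcases le_or_gt a b with hab | hba
  · have hy2 : y ^ 2 ≤ b := by
      refine (pow_le_pow_iff_left₀ (sq_nonneg y) hb0 two_ne_zero).1 ?_
      nlinarith [mul_le_mul_of_nonneg_right hab hb0]
    have hy3 : y ^ 3 ≤ b := by nlinarith [mul_le_mul hy1 hy2 (sq_nonneg y) zero_le_one]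
    nlinarith [mul_le_mul_of_nonneg_left hy3 (mul_nonneg hb0 hL), mul_nonneg hm (sq_nonneg a)]
  rcases le_or_gt (1 / 4) b with hb4 | hb4
  · have hy3 : y ^ 3 ≤ 4 * b := by nlinarith [pow_le_one₀ hy0 hy1 (n := 3)]
    nlinarith [mul_le_mul_of_nonneg_left hy3 (mul_nonneg hb0 hL), mul_nonneg hm (sq_nonneg a)]
  -- near the photon sphere `m = 1/3`, where the angular momentum is bounded
  have hm4 : 1 / 4 < m := by rw [hb] at hb4; linarith [(abs_lt.1 hb4).2]
  have hm5 : m < 5 / 12 := by rw [hb] at hb4; linarith [(abs_lt.1 hb4).1]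
  have hL6 : L ≤ 6 := by nlinarith
  have hy2 : y ^ 2 ≤ a := by
    refine (pow_le_pow_iff_left₀ (sq_nonneg y) ha two_ne_zero).1 ?_
    nlinarith [mul_le_mul_of_nonneg_left hba.le ha]
  have hyb : y ^ 3 * b ≤ a ^ 2 / 3 := by
    refine (pow_le_pow_iff_left₀ (by positivity) (by positivity) two_ne_zero).1 ?_
    have h1 : (y ^ 3 * b) ^ 2 ≤ a * (a * b / 3) * b ^ 2 := by
      rw [← hy]; nlinarith [mul_le_mul_of_nonneg_right hy2 (by positivity : 0 ≤ y ^ 4 * b ^ 2)]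
    have h2 : b ^ 3 ≤ a ^ 2 / 4 := by nlinarith [mul_le_mul hba.le hba.le hb0 ha]
    nlinarith [mul_le_mul_of_nonneg_left h2 (by positivity : 0 ≤ a ^ 2)]
  nlinarith [mul_le_mul hL6 hyb (by positivity) (by norm_num), mul_nonneg hb0 hL,
    mul_le_mul_of_nonneg_right hm4.le (sq_nonneg a)]

end NormalizedShell

section NullShell

variable {M E r p ℓ : ℝ}

lemma abs_le_energy_of_nullShell (hM : 0 ≤ M) (hr : 2 * M < r) (hE : 0 ≤ E)
    (hshell : E ^ 2 = p ^ 2 + (1 - 2 * M / r) * ℓ ^ 2 / r ^ 2) : |p| ≤ E := by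
  have hr0 : 0 < r := by linarith
  have hΩ : 0 < 1 - 2 * M / r := by rw [sub_pos, div_lt_one hr0]; exact hr
  have : (0 : ℝ) ≤ (1 - 2 * M / r) * ℓ ^ 2 / r ^ 2 := by positivity
  exact abs_le_of_sq_le_sq (by linarith) hE

lemma abs_one_sub_three_mul_div_lt_one (hM : 0 < M) (hr : 2 * M < r) : |1 - 3 * M / r| < 1 := by
  have hr0 : 0 < r := by linarith
  have h : 3 * M / r < 3 / 2 := by rw [div_lt_iff₀ hr0]; linarith
  rw [abs_lt]; constructor <;> linarith [div_pos (by linarith : 0 < 3 * M) hr0]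

lemma abs_zetaInner (hE : 0 < E) : |zetaInner M E r p| = |p| / E * |1 - 3 * M / r| / 3 := by
  rw [zetaInner, abs_div, abs_mul, abs_div, abs_of_pos hE, abs_of_pos (three_pos : (0 : ℝ) < 3)]

lemma zetaWeight_mem_Icc (hM : 0 < M) (hr : 2 * M < r) (hE : 0 < E)
    (hshell : E ^ 2 = p ^ 2 + (1 - 2 * M / r) * ℓ ^ 2 / r ^ 2) :
    1 ≤ zetaWeight M E r p ∧ zetaWeight M E r p ≤ 3 := by
  have hX : |zetaInner M E r p| ≤ 1 := by
    rw [abs_zetaInner hE]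
    have hpE : |p| / E ≤ 1 :=
      (div_le_one hE).2 (abs_le_energy_of_nullShell hM.le hr hE.le hshell)
    have : |p| / E * |1 - 3 * M / r| ≤ 1 :=
      mul_le_one₀ hpE (abs_nonneg _) (abs_one_sub_three_mul_div_lt_one hM hr).le
    linarith
  have h := abs_le.1 (abs_signedRpow_le_one (by norm_num : (0 : ℝ) ≤ 1 / 4) hX)
  rw [zetaWeight_eq hM (by linarith) hE]
  constructor <;> linarith [h.1, h.2]

lemma zeta_decay_le_rate (hM : 0 < M) (hr : 2 * M < r) (hE : 0 < E)
    (hshell : E ^ 2 = p ^ 2 + (1 - 2 * M / r) * ℓ ^ 2 / r ^ 2) (hX : zetaInner M E r p ≠ 0) :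
    M / (4 * (1 + 12 * M)) * (|p| / r ^ 2 + |1 - 3 * M / r| * ℓ ^ 2 / (r ^ 3 * E)) ≤
      1 / 4 * |zetaInner M E r p| ^ ((1 : ℝ) / 4 - 1) *
        ((3 * M * p ^ 2 / r ^ 2 + (1 - 3 * M / r) ^ 2 * ℓ ^ 2 / r ^ 3) / (3 * E)) := by
  have hr0 : 0 < r := by linarith
  set y := |zetaInner M E r p| ^ ((1 : ℝ) / 4) with hy
  have hy0 : 0 < y := rpow_pos_of_pos (abs_pos.2 hX) _
  have hy4 : y ^ 4 = |zetaInner M E r p| := by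
    rw [hy, one_div]; exact_mod_cast rpow_inv_natCast_pow (abs_nonneg _) four_ne_zero
  have hpow : |zetaInner M E r p| ^ ((1 : ℝ) / 4 - 1) = 1 / y ^ 3 := by
    rw [rpow_sub_one (abs_ne_zero.2 hX), ← hy, ← hy4]; field_simp
  set a := |p| / E with ha
  set b := |1 - 3 * M / r| with hb
  set m := M / r with hm
  set L := ℓ ^ 2 / (r ^ 2 * E ^ 2) with hL
  have hab : y ^ 4 = a * b / 3 := by rw [hy4, abs_zetaInner hE]
  have hshell' : E ^ 2 * r ^ 3 = p ^ 2 * r ^ 3 + (r - 2 * M) * ℓ ^ 2 := by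
    rw [hshell]; field_simp
  have hnorm : a ^ 2 + (1 - 2 * m) * L = 1 := by
    rw [ha, hm, hL, div_pow, sq_abs]; field_simp; linarith
  have hm2 : 2 * m < 1 := by
    rw [hm, ← lt_div_iff₀' two_pos, div_lt_div_iff₀ hr0 two_pos]; linarith
  have hradial := radial_term_le_rate (by positivity) (abs_one_sub_three_mul_div_lt_one hM hr).le
    (by positivity) hm2.le (by positivity) hnorm hab
  have hangular := angular_term_le_rate (by positivity) (by positivity) hm2
    (by rw [hb, hm, mul_div_assoc]) (by positivity) hnorm hy0.le hab
  have hcore : (a * m + M * (b * L)) * y ^ 3 ≤ (1 + 12 * M) * (m * a ^ 2 + b ^ 2 * L / 3) := by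
    nlinarith [hradial, mul_le_mul_of_nonneg_left hangular hM.le]
  calc M / (4 * (1 + 12 * M)) * (|p| / r ^ 2 + |1 - 3 * M / r| * ℓ ^ 2 / (r ^ 3 * E))
      = E / r * (a * m + M * (b * L)) / (4 * (1 + 12 * M)) := by
        rw [ha, hm, hL, hb]; field_simp
    _ ≤ E / r * ((1 + 12 * M) * (m * a ^ 2 + b ^ 2 * L / 3) / y ^ 3) / (4 * (1 + 12 * M)) := by
        gcongr; rw [le_div_iff₀ (by positivity)]; exact hcore
    _ = _ := by
        rw [hpow, ha, hm, hL, hb, div_pow, sq_abs, sq_abs]; field_simp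

end NullShell

lemma hasDerivWithinAt_zetaInner {M E ℓ s : ℝ} {r prs : ℝ → ℝ} {I : Set ℝ} (hr0 : r s ≠ 0)
    (hr : HasDerivWithinAt r (prs s) I s)
    (hprs : HasDerivWithinAt prs ((r s - 3 * M) / r s ^ 4 * ℓ ^ 2) I s) :
    HasDerivWithinAt (fun u => zetaInner M E (r u) (prs u))
      ((3 * M * prs s ^ 2 / r s ^ 2 + (1 - 3 * M / r s) ^ 2 * ℓ ^ 2 / r s ^ 3) / (3 * E)) I s := by
  have hΩ : HasDerivWithinAt (fun u => 1 - 3 * M / r u) (3 * M * prs s / r s ^ 2) I s :=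
    (((hasDerivWithinAt_const s I (3 * M)).div hr hr0).const_sub 1).congr_deriv (by ring)
  exact (((hprs.div_const E).mul hΩ).div_const 3).congr_deriv (by field_simp; ring)

/-- `1 ≤ ζ ≤ 3` at every point of the null-shell, and there exists `c > 0`,
depending only on `M`, such that along any radially reduced future-directed null geodesic,
at every parameter with `p_{r*} ≠ 0` and `r ≠ 3M`, `ζ` is differentiable with derivative
`≤ −c·(|p_{r*}|/r² + |1 − 3M/r|·ℓ²/(r³E))`. -/
theorem schwarzschild_zeta_weight (M : ℝ) (hM : 0 < M) :
    (∀ rv pv E ℓ : ℝ, 2 * M < rv → 0 < E → 0 ≤ ℓ →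
        E ^ 2 = pv ^ 2 + (1 - 2 * M / rv) * ℓ ^ 2 / rv ^ 2 →
        1 ≤ zetaWeight M E rv pv ∧ zetaWeight M E rv pv ≤ 3) ∧
    ∃ c > 0, ∀ (I : Set ℝ), I.OrdConnected →
      ∀ (r prs : ℝ → ℝ) (E ℓ : ℝ), 0 < E → 0 ≤ ℓ →
      (∀ s ∈ I, 2 * M < r s) →
      (∀ s ∈ I, HasDerivWithinAt r (prs s) I s) →
      (∀ s ∈ I, HasDerivWithinAt prs ((r s - 3 * M) / (r s) ^ 4 * ℓ ^ 2) I s) →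
      (∀ s ∈ I, E ^ 2 = (prs s) ^ 2 + (1 - 2 * M / r s) * ℓ ^ 2 / (r s) ^ 2) →
      ∀ s₀ ∈ I, prs s₀ ≠ 0 → r s₀ ≠ 3 * M →
        ∃ d, HasDerivWithinAt (fun u => zetaWeight M E (r u) (prs u)) d I s₀ ∧
          d ≤ -c * (|prs s₀| / (r s₀) ^ 2
                + |1 - 3 * M / r s₀| * ℓ ^ 2 / ((r s₀) ^ 3 * E)) := by
  refine ⟨fun rv pv E ℓ hr hE _ hshell => zetaWeight_mem_Icc hM hr hE hshell,
    M / (4 * (1 + 12 * M)), by positivity, ?_⟩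
  intro I _ r prs E ℓ hE _ hr hr' hprs' hshell s₀ hs₀ hp hr3
  have hr0 : ∀ s ∈ I, 0 < r s := fun s hs => by linarith [hr s hs]
  have hX : zetaInner M E (r s₀) (prs s₀) ≠ 0 := by
    have : 1 - 3 * M / r s₀ ≠ 0 := by
      rw [sub_ne_zero, ne_comm, Ne, div_eq_one_iff_eq (hr0 s₀ hs₀).ne']; exact fun h => hr3 h.symm
    unfold zetaInner; positivity
  have hζ := ((hasDerivAt_signedRpow ((1 : ℝ) / 4) hX).comp_hasDerivWithinAt s₀
    (hasDerivWithinAt_zetaInner (hr0 s₀ hs₀).ne' (hr' s₀ hs₀) (hprs' s₀ hs₀))).const_sub 2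
  refine ⟨_, hζ.congr (fun u hu => zetaWeight_eq hM (hr0 u hu) hE)
    (zetaWeight_eq hM (hr0 s₀ hs₀) hE), ?_⟩
  rw [neg_mul]
  exact neg_le_neg (zeta_decay_le_rate hM (hr s₀ hs₀) hE (hshell s₀ hs₀) hX)
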